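/- If θδ ≠ 1, then at any equilibrium (ξ₁, ξ₂) with ξ₁ > 0, ξ₂ > 0 of the system ξ₁' = ξ₁(μ₁ + θξ₁ + γξ₂), ξ₂' = ξ₂(μ₂ + ξ₁/γ + δξ₂), the eigenvalues of the Jacobian are never a pair of nonzero purely imaginary complex conjugates. (No Hopf bifurcation occurs at the interior equilibrium.) -/

import Mathlib

/-!
A purely imaginary root `i b`, `b ≠ 0`, of `λ² - (tr J) λ + det J` forces `tr J = 0` and
`det J = b² > 0`. But the off-diagonal entries `γ ξ₁` and `ξ₂ / γ` have positive product, so a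
trace-free `J` has `det J = -(J₀₀)² - J₀₁ J₁₀ < 0`.
-/

theorem Matrix.det_fin_two_neg_of_trace_eq_zero {R : Type*} [CommRing R] [LinearOrder R]
    [IsStrictOrderedRing R] {A : Matrix (Fin 2) (Fin 2) R} (hoff : 0 < A 0 1 * A 1 0)
    (htr : A.trace = 0) : A.det < 0 := by
  rw [Matrix.trace_fin_two] at htr
  have hdiag : A 1 1 = -A 0 0 := by linear_combination htr
  rw [Matrix.det_fin_two, hdiag]
  nlinarith [sq_nonneg (A 0 0)]

theorem eq_zero_and_eq_sq_of_I_mul_root {t d b : ℝ} (hb : b ≠ 0)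
    (hroot : (Complex.I * b) ^ 2 - (t : ℂ) * (Complex.I * b) + (d : ℂ) = 0) :
    t = 0 ∧ d = b ^ 2 := by
  have hre := congrArg Complex.re hroot
  have him := congrArg Complex.im hroot
  simp only [Complex.add_re, Complex.sub_re, Complex.mul_re, Complex.add_im, Complex.sub_im,
    Complex.mul_im, Complex.I_re, Complex.I_im, Complex.ofReal_re, Complex.ofReal_im, sq,
    Complex.zero_re, Complex.zero_im] at hre him
  refine ⟨?_, by linarith⟩
  have htb : t * b = 0 := by linarith
  exact (mul_eq_zero.mp htb).resolve_right hb

theorem stmt_6_general (θ δ γ : ℝ) (hγ : γ ≠ 0)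
    (ξ₁ ξ₂ : ℝ) (hξ₁ : 0 < ξ₁) (hξ₂ : 0 < ξ₂)
    (J : Matrix (Fin 2) (Fin 2) ℝ)
    (hJ : J = !![θ * ξ₁, γ * ξ₁; ξ₂ / γ, δ * ξ₂]) :
    ¬ ∃ b : ℝ, b ≠ 0 ∧
      (Complex.I * b) ^ 2 - (J.trace : ℂ) * (Complex.I * b) + (J.det : ℂ) = 0 ∧
      (-(Complex.I * b)) ^ 2 - (J.trace : ℂ) * (-(Complex.I * b)) + (J.det : ℂ) = 0 := by
  rintro ⟨b, hb, hroot, -⟩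
  obtain ⟨htr, hdet⟩ := eq_zero_and_eq_sq_of_I_mul_root hb hroot
  have hoff : 0 < J 0 1 * J 1 0 := by
    have : γ * ξ₁ * (ξ₂ / γ) = ξ₁ * ξ₂ := by field_simp
    simpa [hJ, this] using mul_pos hξ₁ hξ₂
  have hneg := Matrix.det_fin_two_neg_of_trace_eq_zero hoff htr
  linarith [sq_nonneg b]

/-- No Hopf bifurcation: when θδ ≠ 1, the Jacobian at an interior equilibrium
never has a pair of nonzero purely imaginary conjugate eigenvalues. -/
theorem stmt_6 (μ₁ μ₂ θ δ γ : ℝ) (hγ : γ ≠ 0) (h : θ * δ ≠ 1)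
    (ξ₁ ξ₂ : ℝ) (hξ₁ : 0 < ξ₁) (hξ₂ : 0 < ξ₂)
    (h1 : μ₁ + θ * ξ₁ + γ * ξ₂ = 0) (h2 : μ₂ + ξ₁ / γ + δ * ξ₂ = 0)
    (J : Matrix (Fin 2) (Fin 2) ℝ)
    (hJ : J = !![θ * ξ₁, γ * ξ₁; ξ₂ / γ, δ * ξ₂]) :
    ¬ ∃ b : ℝ, b ≠ 0 ∧
      (Complex.I * b) ^ 2 - (J.trace : ℂ) * (Complex.I * b) + (J.det : ℂ) = 0 ∧
      (-(Complex.I * b)) ^ 2 - (J.trace : ℂ) * (-(Complex.I * b)) + (J.det : ℂ) = 0 :=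
  stmt_6_general θ δ γ hγ ξ₁ ξ₂ hξ₁ hξ₂ J hJ
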